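/- Let G be a graph and let Y be a set of vertices of G such that G - Y is a bipartite permutation graph. Let X_1, ..., X_t be pairwise disjoint sets of vertices of G, each of which induces in G a subgraph isomorphic to one of K3, T2, X2, X3, C5, C6, C7, C8, C9. Then |X_1 ∪ ... ∪ X_t| <= 9|Y|. -/
import Mathlib


open SimpleGraph

/-- `c` is a hole (induced cycle on at least 5 vertices) in `G`:
the images of consecutive indices are adjacent, and these are the only adjacencies. -/
def IsHoleEmb {V : Type*} (G : SimpleGraph V) (n : ℕ) (c : ZMod n → V) : Prop :=
  5 ≤ n ∧ Function.Injective c ∧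
    ∀ i j : ZMod n, G.Adj (c i) (c j) ↔ (j = i + 1 ∨ i = j + 1)

/-- The triangle `K₃`. -/
def graphK3 : SimpleGraph (Fin 3) := ⊤

/-- `T₂`: the star `K_{1,3}` with every edge subdivided once. -/
def graphT2 : SimpleGraph (Fin 7) :=
  SimpleGraph.fromRel (fun i j =>
    (i, j) ∈ [((0 : Fin 7), (1 : Fin 7)), (0, 2), (0, 3), (1, 4), (2, 5), (3, 6)])

/-- `X₂`: a 4-cycle `0 1 2 3` with pendant vertices `4, 5, 6` attached at `0, 1, 2`. -/
def graphX2 : SimpleGraph (Fin 7) :=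
  SimpleGraph.fromRel (fun i j =>
    (i, j) ∈ [((0 : Fin 7), (1 : Fin 7)), (1, 2), (2, 3), (3, 0), (0, 4), (1, 5), (2, 6)])

/-- `X₃`: a path `0 1 2 3 4`, a vertex `5` adjacent to `0, 2, 4`, and a pendant `6` at `5`. -/
def graphX3 : SimpleGraph (Fin 7) :=
  SimpleGraph.fromRel (fun i j =>
    (i, j) ∈ [((0 : Fin 7), (1 : Fin 7)), (1, 2), (2, 3), (3, 4), (5, 0), (5, 2), (5, 4), (5, 6)])

/-- The cycle `C_n` on `ZMod n`. -/
def cycleG (n : ℕ) : SimpleGraph (ZMod n) :=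
  SimpleGraph.fromRel (fun i j => j = i + 1)

/-- `G` contains an induced copy of `H`. -/
def ContainsInduced {W V : Type*} (H : SimpleGraph W) (G : SimpleGraph V) : Prop :=
  Nonempty (H ↪g G)

/-- An almost bipartite permutation graph: no induced `K₃`, `T₂`, `X₂`, `X₃`,
nor `C_k` for `k ∈ {5,…,9}`. -/
def AlmostBPG {V : Type*} (G : SimpleGraph V) : Prop :=
  ¬ ContainsInduced graphK3 G ∧ ¬ ContainsInduced graphT2 G ∧
    ¬ ContainsInduced graphX2 G ∧ ¬ ContainsInduced graphX3 G ∧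
    ∀ k : ℕ, 5 ≤ k → k ≤ 9 → ¬ ContainsInduced (cycleG k) G

/-- `c` is a shortest hole in `G`. -/
def ShortestHole {V : Type*} (G : SimpleGraph V) (m : ℕ) (c : ZMod m → V) : Prop :=
  IsHoleEmb G m c ∧ ∀ (n : ℕ) (c' : ZMod n → V), IsHoleEmb G n c' → m ≤ n

/-- `A_i = {v : N(v) ∩ C = {c_{i-1}, c_{i+1}}}`. -/
def Ai {V : Type*} (G : SimpleGraph V) (m : ℕ) (c : ZMod m → V) (i : ZMod m) : Set V :=
  {v | G.neighborSet v ∩ Set.range c = {c (i - 1), c (i + 1)}}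

/-- `B_i = {v : N(v) ∩ C = {c_i}}`. -/
def Bi {V : Type*} (G : SimpleGraph V) (m : ℕ) (c : ZMod m → V) (i : ZMod m) : Set V :=
  {v | G.neighborSet v ∩ Set.range c = {c i}}

/-- `A[i,j] = A_i ∪ B_{i+1} ∪ A_{i+2} ∪ …` for integers `i ≤ j`. -/
def Ablk {V : Type*} (G : SimpleGraph V) (m : ℕ) (c : ZMod m → V) (i j : ℤ) : Set V :=
  {v | ∃ k : ℤ, i ≤ k ∧ k ≤ j ∧
    ((Even (k - i) ∧ v ∈ Ai G m c (k : ZMod m)) ∨ (Odd (k - i) ∧ v ∈ Bi G m c (k : ZMod m)))}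

/-- `B[i,j] = B_i ∪ A_{i+1} ∪ B_{i+2} ∪ …` for integers `i ≤ j`. -/
def Bblk {V : Type*} (G : SimpleGraph V) (m : ℕ) (c : ZMod m → V) (i j : ℤ) : Set V :=
  {v | ∃ k : ℤ, i ≤ k ∧ k ≤ j ∧
    ((Even (k - i) ∧ v ∈ Bi G m c (k : ZMod m)) ∨ (Odd (k - i) ∧ v ∈ Ai G m c (k : ZMod m)))}

/-- `V[i,j] = A[i,j] ∪ B[i,j]`. -/
def Vblk {V : Type*} (G : SimpleGraph V) (m : ℕ) (c : ZMod m → V) (i j : ℤ) : Set V :=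
  Ablk G m c i j ∪ Bblk G m c i j

/-- The relation `<_{A_i}`. -/
def ltA {V : Type*} (G : SimpleGraph V) (m : ℕ) (c : ZMod m → V) (i : ZMod m)
    (u u' : V) : Prop :=
  (∃ w ∈ Bi G m c (i - 2) ∪ Ai G m c (i - 1), G.Adj w u ∧ ¬ G.Adj w u') ∨
  (∃ w ∈ Ai G m c (i + 1) ∪ Bi G m c (i + 2), G.Adj w u' ∧ ¬ G.Adj w u)

/-- The relation `<_{B_i}`. -/
def ltB {V : Type*} (G : SimpleGraph V) (m : ℕ) (c : ZMod m → V) (i : ZMod m)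
    (w w' : V) : Prop :=
  (∃ u ∈ Ai G m c (i - 2) ∪ Bi G m c (i - 1), G.Adj u w ∧ ¬ G.Adj u w') ∨
  (∃ u ∈ Bi G m c (i + 1) ∪ Ai G m c (i + 2), G.Adj u w' ∧ ¬ G.Adj u w)

/-- `r` is a strict linear order on the set `S`. -/
def IsStrictLinearOrderOn {V : Type*} (S : Set V) (r : V → V → Prop) : Prop :=
  (∀ a ∈ S, ¬ r a a) ∧
    (∀ a ∈ S, ∀ b ∈ S, ∀ d ∈ S, r a b → r b d → r a d) ∧
    (∀ a ∈ S, ∀ b ∈ S, a ≠ b → r a b ∨ r b a)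

/-- `L` extends `r` on the set `S`. -/
def ExtendsOn {V : Type*} (S : Set V) (r L : V → V → Prop) : Prop :=
  ∀ a ∈ S, ∀ b ∈ S, r a b → L a b

/-- `v` is the maximum of `(S, L)`. -/
def IsMaxOf {V : Type*} (S : Set V) (L : V → V → Prop) (v : V) : Prop :=
  v ∈ S ∧ ∀ z ∈ S, z ≠ v → L z v

/-- `v` is the minimum of `(S, L)`. -/
def IsMinOf {V : Type*} (S : Set V) (L : V → V → Prop) (v : V) : Prop :=
  v ∈ S ∧ ∀ z ∈ S, z ≠ v → L v z

/-- `v, v'` belong to `S`, `L v v'`, and they are consecutive in `(S, L)`. -/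
def ConsecIn {V : Type*} (S : Set V) (L : V → V → Prop) (v v' : V) : Prop :=
  v ∈ S ∧ v' ∈ S ∧ L v v' ∧ ¬ ∃ z ∈ S, L v z ∧ L z v'

/-- The relation `≺` built from the chosen linear orders `LA i` on `A_i` and `LB i` on `B_i`. -/
def precRel {V : Type*} (G : SimpleGraph V) (m : ℕ) (c : ZMod m → V)
    (LA LB : ZMod m → V → V → Prop) (v v' : V) : Prop :=
  ∃ i : ZMod m,
    ConsecIn (Ai G m c i) (LA i) v v' ∨
    ConsecIn (Bi G m c i) (LB i) v v' ∨
    (IsMaxOf (Ai G m c i) (LA i) v ∧ IsMinOf (Bi G m c (i + 1)) (LB (i + 1)) v') ∨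
    (IsMaxOf (Bi G m c i) (LB i) v ∧ IsMinOf (Ai G m c (i + 1)) (LA (i + 1)) v')

/-- `<_{V'}`: the transitive closure of `≺` restricted to `V'`. -/
def ltOn {V : Type*} (G : SimpleGraph V) (m : ℕ) (c : ZMod m → V)
    (LA LB : ZMod m → V → V → Prop) (V' : Set V) : V → V → Prop :=
  Relation.TransGen (fun a b => a ∈ V' ∧ b ∈ V' ∧ precRel G m c LA LB a b)

/-- The relation `<_cl`. -/
def ltCl {V : Type*} (G : SimpleGraph V) (m : ℕ) (c : ZMod m → V)
    (LA LB : ZMod m → V → V → Prop) (v v' : V) : Prop :=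
  ∃ i : ℕ, i < m ∧
    ((v ∈ Ablk G m c ((i : ℤ) - 2) ((i : ℤ) + 2) ∧ v' ∈ Ablk G m c ((i : ℤ) - 2) ((i : ℤ) + 2) ∧
        ltOn G m c LA LB (Ablk G m c ((i : ℤ) - 2) ((i : ℤ) + 2)) v v') ∨
      (v ∈ Bblk G m c ((i : ℤ) - 2) ((i : ℤ) + 2) ∧ v' ∈ Bblk G m c ((i : ℤ) - 2) ((i : ℤ) + 2) ∧
        ltOn G m c LA LB (Bblk G m c ((i : ℤ) - 2) ((i : ℤ) + 2)) v v'))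

/-- `r` is a transitive orientation of `G`. -/
def IsTransOrient {V : Type*} (G : SimpleGraph V) (r : V → V → Prop) : Prop :=
  (∀ v, ¬ r v v) ∧ (∀ a b d, r a b → r b d → r a d) ∧
    ∀ u v, u ≠ v → ((r u v ∨ r v u) ↔ G.Adj u v)

/-- A permutation graph: both `G` and its complement admit transitive orientations. -/
def IsPermGraph {V : Type*} (G : SimpleGraph V) : Prop :=
  (∃ r, IsTransOrient G r) ∧ ∃ r, IsTransOrient Gᶜ r

/-- A bipartite permutation graph. -/
def IsBPG {V : Type*} (G : SimpleGraph V) : Prop :=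
  G.Colorable 2 ∧ IsPermGraph G

/-- `X` is a hole cut of `G`: `G - X` is a bipartite permutation graph. -/
def IsHoleCut {V : Type*} (G : SimpleGraph V) (X : Set V) : Prop :=
  IsBPG (G.induce Xᶜ)

/-- The adjacency property: for every `u ∈ U`, `N(u)` consists of vertices
consecutive in `(W, r)`. -/
def AdjProperty {V : Type*} (G : SimpleGraph V) (U W : Set V) (r : V → V → Prop) : Prop :=
  ∀ u ∈ U, ∀ w ∈ W, ∀ w' ∈ W, ∀ w'' ∈ W,
    r w w' → r w' w'' → G.Adj u w → G.Adj u w'' → G.Adj u w'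

/-- The enclosure property: for `u, u' ∈ U` with `N(u) ⊆ N(u')`, the set `N(u') \ N(u)`
consists of vertices consecutive in `(W, r)`. -/
def EncProperty {V : Type*} (G : SimpleGraph V) (U W : Set V) (r : V → V → Prop) : Prop :=
  ∀ u ∈ U, ∀ u' ∈ U, G.neighborSet u ∩ W ⊆ G.neighborSet u' ∩ W →
    ∀ w ∈ W, ∀ w' ∈ W, ∀ w'' ∈ W, r w w' → r w' w'' →
      (G.Adj u' w ∧ ¬ G.Adj u w) → (G.Adj u' w'' ∧ ¬ G.Adj u w'') →
        (G.Adj u' w' ∧ ¬ G.Adj u w')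

/-- `(U, rU)` and `(W, rW)` form a strong ordering of `U ∪ W`. -/
def StrongOrdering {V : Type*} (G : SimpleGraph V) (U W : Set V)
    (rU rW : V → V → Prop) : Prop :=
  ∀ u ∈ U, ∀ u' ∈ U, ∀ w ∈ W, ∀ w' ∈ W,
    G.Adj u w' → G.Adj u' w → rU u u' → rW w w' → G.Adj u w ∧ G.Adj u' w'

/-- `S` induces in `G` one of the graphs `K₃, T₂, X₂, X₃, C₅, …, C₉`. -/
def IsForbiddenSet {V : Type*} (G : SimpleGraph V) (S : Set V) : Prop :=
  Nonempty (graphK3 ≃g G.induce S) ∨ Nonempty (graphT2 ≃g G.induce S) ∨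
    Nonempty (graphX2 ≃g G.induce S) ∨ Nonempty (graphX3 ≃g G.induce S) ∨
    ∃ k : ℕ, 5 ≤ k ∧ k ≤ 9 ∧ Nonempty (cycleG k ≃g G.induce S)



/-! ### Auxiliary material -/

section Aux

open SimpleGraph

instance : DecidableRel graphK3.Adj := fun a b =>
  inferInstanceAs (Decidable (a ≠ b))
instance : DecidableRel graphT2.Adj := fun a b =>
  decidable_of_iff' _ (SimpleGraph.fromRel_adj _ a b)
instance : DecidableRel graphX2.Adj := fun a b =>
  decidable_of_iff' _ (SimpleGraph.fromRel_adj _ a b)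
instance : DecidableRel graphX3.Adj := fun a b =>
  decidable_of_iff' _ (SimpleGraph.fromRel_adj _ a b)
instance (n : ℕ) : DecidableRel (cycleG n).Adj := fun a b =>
  decidable_of_iff' _ (SimpleGraph.fromRel_adj _ a b)
instance : DecidableRel graphT2ᶜ.Adj := fun a b =>
  decidable_of_iff' _ (SimpleGraph.compl_adj graphT2 a b)
instance : DecidableRel graphX2ᶜ.Adj := fun a b =>
  decidable_of_iff' _ (SimpleGraph.compl_adj graphX2 a b)
instance : DecidableRel graphX3ᶜ.Adj := fun a b =>
  decidable_of_iff' _ (SimpleGraph.compl_adj graphX3 a b)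
instance (n : ℕ) : DecidableRel (cycleG n)ᶜ.Adj := fun a b =>
  decidable_of_iff' _ (SimpleGraph.compl_adj (cycleG n) a b)

variable {V : Type*} {W : Type*}

section Force
variable {H : SimpleGraph V} {r : V → V → Prop}

lemma force_out (h : IsTransOrient H r) {a b c : V} (hac : H.Adj a c)
    (hbc : ¬ H.Adj b c) (hbne : b ≠ c) (hab : r a b) : r a c := by
  rcases (h.2.2 a c hac.ne).mpr hac with h1 | h1
  · exact h1
  · exact absurd ((h.2.2 c b hbne.symm).mp (Or.inl (h.2.1 c a b h1 hab)))
      (fun hh => hbc hh.symm)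

lemma force_in (h : IsTransOrient H r) {a b c : V} (hcb : H.Adj c b)
    (hac : ¬ H.Adj a c) (hane : a ≠ c) (hab : r a b) : r c b := by
  rcases (h.2.2 c b hcb.ne).mpr hcb with h1 | h1
  · exact h1
  · exact absurd ((h.2.2 a c hane).mp (Or.inl (h.2.1 a b c hab h1))) hac

lemma flip_ITO (h : IsTransOrient H r) : IsTransOrient H (flip r) :=
  ⟨fun v => h.1 v, fun a b c hab hbc => h.2.1 c b a hbc hab,
    fun u v huv => by rw [or_comm]; exact h.2.2 u v huv⟩

end Force


lemma chainT2 {r : Fin 7 → Fin 7 → Prop} (h : IsTransOrient graphT2ᶜ r)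
    (h0 : r 4 0) : False := by
  have s0 : r 4 2 := force_out h (by decide) (by decide) (by decide) h0
  have s1 : r 1 2 := force_in h (by decide) (by decide) (by decide) s0
  have s2 : r 1 5 := force_out h (by decide) (by decide) (by decide) s1
  have s3 : r 0 5 := force_in h (by decide) (by decide) (by decide) s2
  have s4 : r 3 5 := force_in h (by decide) (by decide) (by decide) s3
  have s5 : r 3 2 := force_out h (by decide) (by decide) (by decide) s4
  have s6 : r 6 2 := force_in h (by decide) (by decide) (by decide) s5
  have s7 : r 6 0 := force_out h (by decide) (by decide) (by decide) s6
  have s8 : r 6 1 := force_out h (by decide) (by decide) (by decide) s7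
  have s9 : r 3 1 := force_in h (by decide) (by decide) (by decide) s8
  have s10 : r 3 4 := force_out h (by decide) (by decide) (by decide) s9
  have s11 : r 0 4 := force_in h (by decide) (by decide) (by decide) s10
  exact h.1 4 (h.2.1 _ _ _ h0 s11)

lemma notPermT2 : ¬ IsPermGraph graphT2 := by
  rintro ⟨-, r, hr⟩
  rcases (hr.2.2 4 0 (by decide)).mpr (by decide : graphT2ᶜ.Adj 4 0) with h | h
  · exact chainT2 hr h
  · exact chainT2 (flip_ITO hr) h

lemma chainX2 {r : Fin 7 → Fin 7 → Prop} (h : IsTransOrient graphX2ᶜ r)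
    (h0 : r 5 4) : False := by
  have s0 : r 5 0 := force_out h (by decide) (by decide) (by decide) h0
  have s1 : r 5 3 := force_out h (by decide) (by decide) (by decide) s0
  have s2 : r 5 2 := force_out h (by decide) (by decide) (by decide) s1
  have s3 : r 5 6 := force_out h (by decide) (by decide) (by decide) s2
  have s4 : r 1 6 := force_in h (by decide) (by decide) (by decide) s3
  have s5 : r 0 6 := force_in h (by decide) (by decide) (by decide) s4
  have s6 : r 0 2 := force_out h (by decide) (by decide) (by decide) s5
  have s7 : r 4 2 := force_in h (by decide) (by decide) (by decide) s6
  have s8 : r 4 1 := force_out h (by decide) (by decide) (by decide) s7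
  have s9 : r 4 5 := force_out h (by decide) (by decide) (by decide) s8
  exact h.1 5 (h.2.1 _ _ _ h0 s9)

lemma notPermX2 : ¬ IsPermGraph graphX2 := by
  rintro ⟨-, r, hr⟩
  rcases (hr.2.2 5 4 (by decide)).mpr (by decide : graphX2ᶜ.Adj 5 4) with h | h
  · exact chainX2 hr h
  · exact chainX2 (flip_ITO hr) h

lemma chainX3 {r : Fin 7 → Fin 7 → Prop} (h : IsTransOrient graphX3ᶜ r)
    (h0 : r 4 0) : False := by
  have s0 : r 4 1 := force_out h (by decide) (by decide) (by decide) h0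
  have s1 : r 5 1 := force_in h (by decide) (by decide) (by decide) s0
  have s2 : r 6 1 := force_in h (by decide) (by decide) (by decide) s1
  have s3 : r 6 2 := force_out h (by decide) (by decide) (by decide) s2
  have s4 : r 6 3 := force_out h (by decide) (by decide) (by decide) s3
  have s5 : r 5 3 := force_in h (by decide) (by decide) (by decide) s4
  have s6 : r 0 3 := force_in h (by decide) (by decide) (by decide) s5
  have s7 : r 0 4 := force_out h (by decide) (by decide) (by decide) s6
  exact h.1 4 (h.2.1 _ _ _ h0 s7)

lemma notPermX3 : ¬ IsPermGraph graphX3 := by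
  rintro ⟨-, r, hr⟩
  rcases (hr.2.2 4 0 (by decide)).mpr (by decide : graphX3ᶜ.Adj 4 0) with h | h
  · exact chainX3 hr h
  · exact chainX3 (flip_ITO hr) h

lemma chainC6 {r : ZMod 6 → ZMod 6 → Prop} (h : IsTransOrient (cycleG 6)ᶜ r)
    (h0 : r 2 4) : False := by
  have s0 : r 1 4 := force_in h (by decide) (by decide) (by decide) h0
  have s1 : r 0 4 := force_in h (by decide) (by decide) (by decide) s0
  have s2 : r 0 3 := force_out h (by decide) (by decide) (by decide) s1
  have s3 : r 0 2 := force_out h (by decide) (by decide) (by decide) s2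
  have s4 : r 5 2 := force_in h (by decide) (by decide) (by decide) s3
  have s5 : r 4 2 := force_in h (by decide) (by decide) (by decide) s4
  exact h.1 2 (h.2.1 _ _ _ h0 s5)

lemma notPermC6 : ¬ IsPermGraph (cycleG 6) := by
  rintro ⟨-, r, hr⟩
  rcases (hr.2.2 2 4 (by decide)).mpr (by decide : (cycleG 6)ᶜ.Adj 2 4) with h | h
  · exact chainC6 hr h
  · exact chainC6 (flip_ITO hr) h

lemma chainC8 {r : ZMod 8 → ZMod 8 → Prop} (h : IsTransOrient (cycleG 8)ᶜ r)
    (h0 : r 4 0) : False := by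
  have s0 : r 4 1 := force_out h (by decide) (by decide) (by decide) h0
  have s1 : r 4 2 := force_out h (by decide) (by decide) (by decide) s0
  have s2 : r 5 2 := force_in h (by decide) (by decide) (by decide) s1
  have s3 : r 5 3 := force_out h (by decide) (by decide) (by decide) s2
  have s4 : r 6 3 := force_in h (by decide) (by decide) (by decide) s3
  have s5 : r 6 4 := force_out h (by decide) (by decide) (by decide) s4
  have s6 : r 7 4 := force_in h (by decide) (by decide) (by decide) s5
  have s7 : r 0 4 := force_in h (by decide) (by decide) (by decide) s6
  exact h.1 4 (h.2.1 _ _ _ h0 s7)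

lemma notPermC8 : ¬ IsPermGraph (cycleG 8) := by
  rintro ⟨-, r, hr⟩
  rcases (hr.2.2 4 0 (by decide)).mpr (by decide : (cycleG 8)ᶜ.Adj 4 0) with h | h
  · exact chainC8 hr h
  · exact chainC8 (flip_ITO hr) h



section Hered
variable {H : SimpleGraph W} {G : SimpleGraph V}

lemma ITO_map (f : H ↪g G) {r : V → V → Prop} (hr : IsTransOrient G r) :
    IsTransOrient H (fun a b => r (f a) (f b)) := by
  refine ⟨fun v => hr.1 _, fun a b c => hr.2.1 _ _ _, fun u v huv => ?_⟩
  rw [hr.2.2 _ _ (fun hh => huv (f.injective hh)), f.map_adj_iff]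

/-- An embedding between graphs induces one between their complements. -/
def embCompl (f : H ↪g G) : Hᶜ ↪g Gᶜ where
  toEmbedding := f.toEmbedding
  map_rel_iff' := by
    intro a b
    simp only [Function.Embedding.coeFn_mk, SimpleGraph.compl_adj, f.map_adj_iff,
      RelEmbedding.coe_toEmbedding]
    rw [f.injective.ne_iff]

lemma perm_of_emb (f : H ↪g G) (h : IsPermGraph G) : IsPermGraph H := by
  obtain ⟨⟨r1, h1⟩, ⟨r2, h2⟩⟩ := h
  exact ⟨⟨_, ITO_map f h1⟩, ⟨_, ITO_map (embCompl f) h2⟩⟩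

lemma colorable_of_emb (f : H ↪g G) {n : ℕ} (h : G.Colorable n) : H.Colorable n := by
  obtain ⟨C⟩ := h
  exact ⟨SimpleGraph.Coloring.mk (fun v => C (f v))
    (fun hadj => C.valid (f.map_adj_iff.mpr hadj))⟩

lemma bpg_of_emb (f : H ↪g G) (h : IsBPG G) : IsBPG H :=
  ⟨colorable_of_emb f h.1, perm_of_emb f h.2⟩

end Hered

/-- Monotonicity of induced subgraphs. -/
def induceMono (G : SimpleGraph V) {S T : Set V} (h : S ⊆ T) :
    G.induce S ↪g G.induce T where
  toFun v := ⟨v.1, h v.2⟩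
  inj' a b hab := by
    apply Subtype.ext
    have h2 := congrArg Subtype.val hab
    exact h2
  map_rel_iff' := Iff.rfl

lemma notColK3 : ¬ graphK3.Colorable 2 := by
  rintro ⟨C⟩
  have h01 := C.valid (show graphK3.Adj 0 1 by decide)
  have h02 := C.valid (show graphK3.Adj 0 2 by decide)
  have h12 := C.valid (show graphK3.Adj 1 2 by decide)
  have key3 : ∀ (a b c : Fin 2), ¬(a ≠ b ∧ a ≠ c ∧ b ≠ c) := by decide
  exact key3 _ _ _ ⟨h01, h02, h12⟩

lemma notColC5 : ¬ (cycleG 5).Colorable 2 := by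
  rintro ⟨C⟩
  have h0 := C.valid (show (cycleG 5).Adj 0 1 by decide)
  have h1 := C.valid (show (cycleG 5).Adj 1 2 by decide)
  have h2 := C.valid (show (cycleG 5).Adj 2 3 by decide)
  have h3 := C.valid (show (cycleG 5).Adj 3 4 by decide)
  have h4 := C.valid (show (cycleG 5).Adj 4 0 by decide)
  have key5 : ∀ (a b c d e : Fin 2), ¬(a ≠ b ∧ b ≠ c ∧ c ≠ d ∧ d ≠ e ∧ e ≠ a) := by
    decide
  exact key5 _ _ _ _ _ ⟨h0, h1, h2, h3, h4⟩

set_option synthInstance.maxSize 2000 in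
lemma notColC7 : ¬ (cycleG 7).Colorable 2 := by
  rintro ⟨C⟩
  have h0 := C.valid (show (cycleG 7).Adj 0 1 by decide)
  have h1 := C.valid (show (cycleG 7).Adj 1 2 by decide)
  have h2 := C.valid (show (cycleG 7).Adj 2 3 by decide)
  have h3 := C.valid (show (cycleG 7).Adj 3 4 by decide)
  have h4 := C.valid (show (cycleG 7).Adj 4 5 by decide)
  have h5 := C.valid (show (cycleG 7).Adj 5 6 by decide)
  have h6 := C.valid (show (cycleG 7).Adj 6 0 by decide)
  have key7 : ∀ (a b c d e f g : Fin 2),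
      ¬(a ≠ b ∧ b ≠ c ∧ c ≠ d ∧ d ≠ e ∧ e ≠ f ∧ f ≠ g ∧ g ≠ a) := by
    decide
  exact key7 _ _ _ _ _ _ _ ⟨h0, h1, h2, h3, h4, h5, h6⟩

set_option synthInstance.maxSize 2000 in
lemma notColC9 : ¬ (cycleG 9).Colorable 2 := by
  rintro ⟨C⟩
  have h0 := C.valid (show (cycleG 9).Adj 0 1 by decide)
  have h1 := C.valid (show (cycleG 9).Adj 1 2 by decide)
  have h2 := C.valid (show (cycleG 9).Adj 2 3 by decide)
  have h3 := C.valid (show (cycleG 9).Adj 3 4 by decide)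
  have h4 := C.valid (show (cycleG 9).Adj 4 5 by decide)
  have h5 := C.valid (show (cycleG 9).Adj 5 6 by decide)
  have h6 := C.valid (show (cycleG 9).Adj 6 7 by decide)
  have h7 := C.valid (show (cycleG 9).Adj 7 8 by decide)
  have h8 := C.valid (show (cycleG 9).Adj 8 0 by decide)
  have key9 : ∀ (a b c d e f g p q : Fin 2),
      ¬(a ≠ b ∧ b ≠ c ∧ c ≠ d ∧ d ≠ e ∧ e ≠ f ∧ f ≠ g ∧ g ≠ p ∧ p ≠ q ∧ q ≠ a) := by
    decide
  exact key9 _ _ _ _ _ _ _ _ _ ⟨h0, h1, h2, h3, h4, h5, h6, h7, h8⟩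

lemma notBPG_K3 : ¬ IsBPG graphK3 := fun h => notColK3 h.1
lemma notBPG_T2 : ¬ IsBPG graphT2 := fun h => notPermT2 h.2
lemma notBPG_X2 : ¬ IsBPG graphX2 := fun h => notPermX2 h.2
lemma notBPG_X3 : ¬ IsBPG graphX3 := fun h => notPermX3 h.2

lemma notBPG_Ck {k : ℕ} (h5 : 5 ≤ k) (h9 : k ≤ 9) : ¬ IsBPG (cycleG k) := by
  interval_cases k
  · exact fun h => notColC5 h.1
  · exact fun h => notPermC6 h.2
  · exact fun h => notColC7 h.1
  · exact fun h => notPermC8 h.2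
  · exact fun h => notColC9 h.1

lemma keyHelper {W : Type*} [Finite W] {H : SimpleGraph W} {G : SimpleGraph V}
    {S Y2 : Set V} (hH : ¬ IsBPG H) (iso : H ≃g G.induce S) (hcard : Nat.card W ≤ 9)
    (hY : IsBPG (G.induce Y2ᶜ)) : S.Finite ∧ S.ncard ≤ 9 ∧ (S ∩ Y2).Nonempty := by
  have e : W ≃ S := iso.toEquiv
  have hfin : S.Finite := by
    rw [← Set.finite_coe_iff]; exact Finite.of_equiv W e
  have hcard' : S.ncard ≤ 9 := by
    rw [← Nat.card_coe_set_eq, ← Nat.card_congr e]; exact hcard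
  refine ⟨hfin, hcard', ?_⟩
  rw [Set.nonempty_iff_ne_empty]
  intro hemp
  have hsub : S ⊆ Y2ᶜ := fun v hv hvY => by
    rw [Set.eq_empty_iff_forall_notMem] at hemp
    exact hemp v ⟨hv, hvY⟩
  exact hH (bpg_of_emb ((induceMono G hsub).comp iso.toEmbedding) hY)

end Aux


theorem forbidden_sets_bound {V : Type*} (G : SimpleGraph V)
    (Y : Set V) (hYfin : Y.Finite) (hY : IsBPG (G.induce Yᶜ))
    (t : ℕ) (X : Fin t → Set V)
    (hdisj : ∀ i j : Fin t, i ≠ j → Disjoint (X i) (X j))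
    (hforb : ∀ i : Fin t, IsForbiddenSet G (X i)) :
    (⋃ i, X i).ncard ≤ 9 * Y.ncard := by
  classical
  have key : ∀ i : Fin t, (X i).Finite ∧ (X i).ncard ≤ 9 ∧ (X i ∩ Y).Nonempty := by
    intro i
    rcases hforb i with h | h | h | h | ⟨k, hk5, hk9, h⟩
    · obtain ⟨iso⟩ := h
      exact keyHelper notBPG_K3 iso (by simp [Nat.card_eq_fintype_card]) hY
    · obtain ⟨iso⟩ := h
      exact keyHelper notBPG_T2 iso (by simp [Nat.card_eq_fintype_card]) hY
    · obtain ⟨iso⟩ := h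
      exact keyHelper notBPG_X2 iso (by simp [Nat.card_eq_fintype_card]) hY
    · obtain ⟨iso⟩ := h
      exact keyHelper notBPG_X3 iso (by simp [Nat.card_eq_fintype_card]) hY
    · obtain ⟨iso⟩ := h
      haveI : NeZero k := ⟨by omega⟩
      exact keyHelper (notBPG_Ck hk5 hk9) iso
        (by rw [Nat.card_eq_fintype_card, ZMod.card]; omega) hY
  -- the union as a finset
  have hU : (⋃ i, X i) = ↑(Finset.univ.biUnion fun i => (key i).1.toFinset) := by
    ext v
    simp [Set.Finite.mem_toFinset]
  have hcardle : (⋃ i, X i).ncard ≤ 9 * t := by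
    rw [hU, Set.ncard_coe_finset]
    calc (Finset.univ.biUnion fun i => (key i).1.toFinset).card
        ≤ ∑ i, ((key i).1.toFinset).card := Finset.card_biUnion_le
      _ ≤ ∑ _i : Fin t, 9 := by
          apply Finset.sum_le_sum
          intro i _
          rw [← Set.ncard_eq_toFinset_card _ (key i).1]
          exact (key i).2.1
      _ = 9 * t := by simp [Finset.sum_const, Nat.mul_comm]
  have hpick : ∀ i : Fin t, ∃ v, v ∈ X i ∧ v ∈ Y := fun i => (key i).2.2
  choose g hgX hgY using hpick
  haveI : Finite ↑Y := hYfin.to_subtype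
  have hginj : Function.Injective (fun i => (⟨g i, hgY i⟩ : Y)) := by
    intro i j hij
    by_contra hne2
    have hd := hdisj i j hne2
    have hval : g i = g j := congrArg Subtype.val hij
    exact (Set.disjoint_left.mp hd (hgX i)) (hval ▸ hgX j)
  have ht : t ≤ Y.ncard := by
    have h := Nat.card_le_card_of_injective _ hginj
    rwa [Nat.card_eq_fintype_card, Fintype.card_fin, Nat.card_coe_set_eq] at h
  calc (⋃ i, X i).ncard ≤ 9 * t := hcardle
    _ ≤ 9 * Y.ncard := Nat.mul_le_mul_left 9 ht
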